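/- arXiv:1110.0091 — 4 statements merged into one kernel-verified Lean document; each statement's English description precedes it below -/
import Mathlib

section
/- For every continuous function f : S² → ℂ, there exists a point x ∈ S² such that f(x) = f(-x). -/
/-!
It suffices to show that the odd map `g x = f x - f (-x)` has a zero. If it had none, `g` composed
with the inverse stereographic projection `ℂ → S²` would have a continuous logarithm `θ`, because `ℂ`
is simply connected. That projection sends `-z` to the antipode of the image of `z` when `‖z‖ = 1`,
so along the loop `t ↦ exp (t i)` the function `exp ∘ θ` is antiperiodic with antiperiod `π`.
Then `θ (t + π) - θ t` is a constant `d` with `exp d = -1`, so one turn around the loop changes `θ`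
by `2 d ≠ 0`, although the loop is closed.
-/

open Complex Function

theorem Complex.eq_of_exp_comp_eq {A : Type*} [TopologicalSpace A] [PreconnectedSpace A]
    {φ ψ : A → ℂ} (hφ : Continuous φ) (hψ : Continuous ψ) (he : ∀ a, exp (φ a) = exp (ψ a))
    (a : A) (ha : φ a = ψ a) : φ = ψ :=
  isCoveringMap_exp.eq_of_comp_eq hφ hψ (funext fun a ↦ Subtype.ext (he a)) a ha

theorem Complex.exists_continuous_exp_comp_eq {A : Type*} [TopologicalSpace A]
    [SimplyConnectedSpace A] [LocallyPathConnectedSpace A] {g : A → ℂ} (hg : Continuous g)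
    (hg₀ : ∀ a, g a ≠ 0) : ∃ θ : A → ℂ, Continuous θ ∧ ∀ a, exp (θ a) = g a := by
  obtain ⟨a₀⟩ : Nonempty A := inferInstance
  obtain ⟨θ, ⟨-, hθ⟩, -⟩ := isCoveringMapOn_exp.existsUnique_continuousMap_lifts ⟨g, hg⟩
    (exp_log (hg₀ a₀)) hg₀
  exact ⟨θ, θ.continuous, congrFun hθ⟩

theorem Complex.not_antiperiodic_exp_comp {θ : ℝ → ℂ} (hθ : Continuous θ) {c : ℝ}
    (hθc : θ (2 * c) = θ 0) : ¬ Antiperiodic (fun t ↦ exp (θ t)) c := by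
  intro hanti
  replace hanti : ∀ t, exp (θ (t + c)) = -exp (θ t) := hanti
  set d := θ c - θ 0
  have hd : exp d = -1 := by
    rw [exp_sub, ← zero_add c, hanti 0, neg_div, div_self (exp_ne_zero _)]
  have hshift : (θ <| · + c) = (θ · + d) :=
    eq_of_exp_comp_eq (by fun_prop) (by fun_prop)
      (fun t ↦ by rw [hanti t, exp_add, hd, mul_neg_one]) 0 (by simp [d])
  have h2c : θ (2 * c) = θ 0 + 2 * d := by
    rw [two_mul, congrFun hshift c]; ring
  have : d = 0 := by linear_combination (h2c.symm.trans hθc) / 2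
  norm_num [this] at hd

theorem exists_eq_zero_of_antiperiodic_comp {A : Type*} [TopologicalSpace A]
    [SimplyConnectedSpace A] [LocallyPathConnectedSpace A] {g : A → ℂ} (hg : Continuous g)
    {γ : ℝ → A} (hγ : Continuous γ) {c : ℝ} (hγc : γ (2 * c) = γ 0)
    (hanti : Antiperiodic (g ∘ γ) c) : ∃ a, g a = 0 := by
  by_contra! hg₀
  obtain ⟨θ, hθ, hθg⟩ := exists_continuous_exp_comp_eq hg hg₀
  refine not_antiperiodic_exp_comp (hθ.comp hγ) (congrArg θ hγc) ?_
  simpa [Function.comp_def, hθg] using hanti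

noncomputable def inverseStereographic (z : ℂ) : EuclideanSpace ℝ (Fin 3) :=
  (1 + ‖z‖ ^ 2)⁻¹ • !₂[2 * z.re, 2 * z.im, 1 - ‖z‖ ^ 2]

theorem norm_inverseStereographic (z : ℂ) : ‖inverseStereographic z‖ = 1 := by
  have hsq : (2 * z.re) ^ 2 + (2 * z.im) ^ 2 + (1 - ‖z‖ ^ 2) ^ 2 = (1 + ‖z‖ ^ 2) ^ 2 := by
    rw [Complex.sq_norm, normSq_apply]; ring
  have hpos : 0 < 1 + ‖z‖ ^ 2 := by positivity
  rw [inverseStereographic, norm_smul, EuclideanSpace.norm_eq, Fin.sum_univ_three]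
  simp only [Real.norm_eq_abs, sq_abs, Matrix.cons_val, hsq, Real.sqrt_sq hpos.le, norm_inv,
    abs_of_pos hpos]
  exact inv_mul_cancel₀ hpos.ne'

theorem continuous_inverseStereographic : Continuous inverseStereographic := by
  unfold inverseStereographic
  fun_prop (disch := intro; positivity)

theorem inverseStereographic_neg {z : ℂ} (hz : ‖z‖ = 1) :
    inverseStereographic (-z) = -inverseStereographic z := by
  ext i
  fin_cases i <;> simp [inverseStereographic, hz]

theorem exists_eq_zero_of_odd (g : C(Metric.sphere (0 : EuclideanSpace ℝ (Fin 3)) 1, ℂ))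
    (hodd : ∀ x, g (-x) = -g x) : ∃ x, g x = 0 := by
  let σ (z : ℂ) : Metric.sphere (0 : EuclideanSpace ℝ (Fin 3)) 1 :=
    ⟨inverseStereographic z, mem_sphere_zero_iff_norm.2 (norm_inverseStereographic z)⟩
  have hσ : Continuous σ := continuous_inverseStereographic.subtype_mk _
  have hσ_neg {z : ℂ} (hz : ‖z‖ = 1) : σ (-z) = -σ z :=
    Subtype.ext (inverseStereographic_neg hz)
  have hloop : exp ((2 * Real.pi : ℝ) * I) = exp ((0 : ℝ) * I) := by simp
  have hanti : Antiperiodic (g ∘ σ ∘ fun t : ℝ ↦ exp (t * I)) Real.pi := fun t ↦ by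
    simp only [Function.comp_apply, ofReal_add, add_mul, exp_add, exp_pi_mul_I, mul_neg_one,
      hσ_neg (norm_exp_ofReal_mul_I t), hodd]
  obtain ⟨z, hz⟩ := exists_eq_zero_of_antiperiodic_comp (g.continuous.comp hσ) (by fun_prop)
    hloop hanti
  exact ⟨σ z, hz⟩

theorem stmt_0 (f : C(Metric.sphere (0 : EuclideanSpace ℝ (Fin 3)) 1, ℂ)) :
    ∃ x : Metric.sphere (0 : EuclideanSpace ℝ (Fin 3)) 1, f x = f (-x) := by
  obtain ⟨x, hx⟩ := exists_eq_zero_of_odd (f - f.comp ⟨Neg.neg, continuous_neg⟩)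
    (fun x ↦ by simp)
  exact ⟨x, sub_eq_zero.1 hx⟩
end

section
/- Every odd continuous function f : S² → ℂ (i.e., f(-x) = -f(x) for all x) vanishes at some point of S². -/
/-!
Suppose `f` has no zero. Inverse stereographic projection from a pole parametrizes the sphere by
the plane `U` orthogonal to that pole, and sends the circle of radius `2` in `U` onto the equator,
commuting with `x ↦ -x` there. Since `U` is simply connected and `exp : ℂ → ℂ \ {0}` is a covering
map, `f` pulled back to `U` has a continuous logarithm `L`. On the circle, oddness of `f` makes
`D w = L (-w) - L w` a continuous function with `exp D = -1`, hence constant on the connected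
circle; but `D` is odd, so this constant is `0`, contradicting `exp 0 = 1`.
-/

open Complex Metric Module

theorem ContinuousMap.exists_exp_eq_of_forall_ne_zero {A : Type*} [TopologicalSpace A]
    [SimplyConnectedSpace A] [LocallyPathConnectedSpace A] (g : C(A, ℂ)) (hg : ∀ a, g a ≠ 0) :
    ∃ L : C(A, ℂ), ∀ a, exp (L a) = g a := by
  obtain ⟨a₀⟩ : Nonempty A := inferInstance
  obtain ⟨L, hL, -⟩ :=
    isCoveringMapOn_exp.existsUnique_continuousMap_lifts g (exp_log (hg a₀)) hg
  exact ⟨L, congrFun hL.2⟩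

theorem IsPreconnected.exists_exp_neg_ne_neg_exp {A : Type*} [TopologicalSpace A]
    [InvolutiveNeg A] [ContinuousNeg A] {S : Set A} (hS : IsPreconnected S)
    (hS_neg : ∀ x ∈ S, -x ∈ S) (hS_ne : S.Nonempty) {L : A → ℂ} (hL : ContinuousOn L S) :
    ∃ x ∈ S, exp (L (-x)) ≠ -exp (L x) := by
  by_contra! hodd
  obtain ⟨x₀, hx₀⟩ := hS_ne
  set D : A → ℂ := fun x ↦ L (-x) - L x
  have hD_exp : ∀ x ∈ S, exp (D x) = -1 := fun x hx ↦ by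
    rw [exp_sub, hodd x hx, neg_div, div_self (exp_ne_zero _)]
  have hD_cont : ContinuousOn D S := (hL.comp continuous_neg.continuousOn hS_neg).sub hL
  have hD_const : S.EqOn D (fun _ ↦ D x₀) :=
    isCoveringMap_exp.eqOn_of_comp_eqOn hS hD_cont continuousOn_const
      (fun x hx ↦ Subtype.ext (by simp [hD_exp x hx, hD_exp x₀ hx₀])) hx₀ rfl
  have hD_zero : D x₀ = 0 := by
    have h := hD_const (hS_neg x₀ hx₀)
    simp only [D, neg_neg] at h
    linear_combination -h / 2
  have h := hD_exp x₀ hx₀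
  rw [hD_zero, exp_zero] at h
  norm_num at h

theorem stereoInvFun_neg_of_norm_eq_two {E : Type*} [NormedAddCommGroup E]
    [InnerProductSpace ℝ E] {v : E} (hv : ‖v‖ = 1) {w : (ℝ ∙ v)ᗮ} (hw : ‖w‖ = 2) :
    stereoInvFun hv (-w) = -stereoInvFun hv w := by
  ext1
  norm_num [hw]

theorem ContinuousMap.exists_apply_eq_zero_of_odd {E : Type*} [NormedAddCommGroup E]
    [InnerProductSpace ℝ E] [FiniteDimensional ℝ E] (hE : 2 < finrank ℝ E)
    (f : C(sphere (0 : E) 1, ℂ)) (hodd : ∀ x, f (-x) = -f x) : ∃ x, f x = 0 := by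
  by_contra! hf
  have : Nontrivial E := finrank_pos_iff (R := ℝ) |>.mp (by omega)
  obtain ⟨v, hv⟩ := (NormedSpace.sphere_nonempty (x := (0 : E)) (r := 1)).mpr zero_le_one
  rw [mem_sphere_zero_iff_norm] at hv
  have hU : 1 < finrank ℝ (ℝ ∙ v)ᗮ := by
    have := Submodule.finrank_add_finrank_orthogonal (ℝ ∙ v)
    rw [finrank_span_singleton (norm_ne_zero_iff.mp (hv.trans_ne one_ne_zero))] at this
    omega
  have : Nontrivial (ℝ ∙ v)ᗮ := finrank_pos_iff (R := ℝ) |>.mp (by omega)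
  obtain ⟨L, hL⟩ := (f.comp ⟨stereoInvFun hv, continuous_stereoInvFun hv⟩)
    |>.exists_exp_eq_of_forall_ne_zero fun _ ↦ hf _
  have hS := (isConnected_sphere (lt_rank_of_lt_finrank hU) (0 : (ℝ ∙ v)ᗮ) zero_le_two)
  obtain ⟨w, hw, hne⟩ := hS.isPreconnected.exists_exp_neg_ne_neg_exp (by simp)
    (NormedSpace.sphere_nonempty.mpr zero_le_two) L.continuous.continuousOn
  rw [mem_sphere_zero_iff_norm] at hw
  apply hne
  simp only [hL, ContinuousMap.comp_apply, ContinuousMap.coe_mk,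
    stereoInvFun_neg_of_norm_eq_two hv hw, hodd]

theorem stmt_1 (f : C(Metric.sphere (0 : EuclideanSpace ℝ (Fin 3)) 1, ℂ))
    (hodd : ∀ x : Metric.sphere (0 : EuclideanSpace ℝ (Fin 3)) 1, f (-x) = -f x) :
    ∃ x : Metric.sphere (0 : EuclideanSpace ℝ (Fin 3)) 1, f x = 0 :=
  f.exists_apply_eq_zero_of_odd (by simp) hodd
end

section
/- Let X be a compact, locally path-connected, simply connected topological space, φ : X → X a homeomorphism with φⁿ = id, and λ ≠ 1 an n-th root of unity. Then for every continuous function f : X → ℂ there exists x ∈ X with ∑_{i=0}^{n-1} λⁱ f(φⁱ(x)) = 0. -/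
/-!
If `S x = ∑ i < n, λⁱ f(φⁱ x)` had no zero, it would be a nowhere-vanishing continuous function
with `λ S(φ x) = S x`. On a simply connected, locally path-connected space `S = exp h` for a
continuous `h`, and uniqueness of lifts through the covering `exp` forces `h ∘ φ = h - c` with
`exp c = λ`. Iterating `n` times gives `n c = 0`, hence `λ = 1`.
-/

open Complex Finset

theorem mul_sum_range_pow_mul_succ {R : Type*} [CommRing R] {μ : R} {a : ℕ → R} {n : ℕ}
    (h : μ ^ n * a n = a 0) :
    μ * ∑ i ∈ range n, μ ^ i * a (i + 1) = ∑ i ∈ range n, μ ^ i * a i := by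
  have hsplit := (sum_range_succ' (fun i ↦ μ ^ i * a i) n).symm.trans
    (sum_range_succ (fun i ↦ μ ^ i * a i) n)
  rw [h, pow_zero, one_mul] at hsplit
  rw [mul_sum, ← add_right_cancel hsplit]
  exact sum_congr rfl fun i _ ↦ by ring

theorem eq_one_of_mul_comp_eq {X : Type*} [TopologicalSpace X] [SimplyConnectedSpace X]
    [LocallyPathConnectedSpace X] {g : C(X, ℂ)} (hg : ∀ x, g x ≠ 0) {ψ : C(X, X)} {n : ℕ}
    (hn : n ≠ 0) (hψ : ∀ x, ψ^[n] x = x) {μ : ℂ} (hμ : ∀ x, μ * g (ψ x) = g x) : μ = 1 := by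
  obtain ⟨x₀⟩ : Nonempty X := inferInstance
  obtain ⟨h, ⟨hx₀, hexp⟩, hunique⟩ :=
    isCoveringMapOn_exp.existsUnique_continuousMap_lifts g (exp_log (hg x₀)) hg
  have hexp' (x : X) : exp (h x) = g x := congrFun hexp x
  set c := h x₀ - h (ψ x₀)
  have hc : exp c = μ := by
    rw [exp_sub, hexp', hexp', ← hμ x₀, mul_div_cancel_right₀ _ (hg _)]
  have hshift (x : X) : h (ψ x) + c = h x := by
    refine DFunLike.congr_fun (hunique (h.comp ψ + .const X c) ⟨?_, funext fun y ↦ ?_⟩) x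
    · simp [c, hx₀]
    · simp [exp_add, hexp', hc, mul_comm, hμ]
  have hiter (m : ℕ) : h (ψ^[m] x₀) + m * c = h x₀ := by
    induction m with
    | zero => simp
    | succ m ih =>
      rw [Function.iterate_succ_apply', ← ih, ← hshift (ψ^[m] x₀)]
      push_cast
      ring
  have hnc : (n : ℂ) * c = 0 := by simpa [hψ] using hiter n
  rw [← hc, (mul_eq_zero.mp hnc).resolve_left (Nat.cast_ne_zero.mpr hn), exp_zero]

theorem stmt_3_general {X : Type*} [TopologicalSpace X]
    [LocallyPathConnectedSpace X] [SimplyConnectedSpace X]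
    (n : ℕ) (hn : 0 < n) (φ : X ≃ₜ X) (hφ : ∀ x, (⇑φ)^[n] x = x)
    (lam : ℂ) (hlam : lam ^ n = 1) (hlam1 : lam ≠ 1)
    (f : C(X, ℂ)) :
    ∃ x : X, ∑ i ∈ Finset.range n, lam ^ i * f ((⇑φ)^[i] x) = 0 := by
  by_contra! hS
  let S : C(X, ℂ) := ⟨fun x ↦ ∑ i ∈ range n, lam ^ i * f ((⇑φ)^[i] x),
    continuous_finsetSum _ fun i _ ↦
      continuous_const.mul (f.continuous.comp (φ.continuous.iterate i))⟩
  refine hlam1 (eq_one_of_mul_comp_eq (g := S) hS (ψ := φ) hn.ne' hφ fun x ↦ ?_)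
  have hsum := mul_sum_range_pow_mul_succ (μ := lam) (a := fun i ↦ f (φ^[i] x)) (n := n)
    (by simp only [hlam, hφ, one_mul, Function.iterate_zero_apply])
  simp only [Function.iterate_succ_apply] at hsum
  exact hsum

theorem stmt_3 {X : Type*} [TopologicalSpace X] [CompactSpace X] [T2Space X]
    [LocallyPathConnectedSpace X] [SimplyConnectedSpace X]
    (n : ℕ) (hn : 0 < n) (φ : X ≃ₜ X) (hφ : ∀ x, (⇑φ)^[n] x = x)
    (lam : ℂ) (hlam : lam ^ n = 1) (hlam1 : lam ≠ 1)
    (f : C(X, ℂ)) :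
    ∃ x : X, ∑ i ∈ Finset.range n, lam ^ i * f ((⇑φ)^[i] x) = 0 :=
  stmt_3_general n hn φ hφ lam hlam hlam1 f
end

section
/- For every continuous function f : S² → ℝ² there exists a point (x₀,y₀,z₀) ∈ S² such that f(y₀,-x₀,-z₀) - f(-x₀,-y₀,z₀) + f(-y₀,x₀,-z₀) - f(x₀,y₀,z₀) = 0. -/
/-!
Write `φ(x, y, z) = (-y, x, -z)`. The alternating sum `A = f∘φ³ - f∘φ² + f∘φ - f` satisfies
`A ∘ φ = -A`. Viewing `A` as complex-valued and pulling it back along inverse stereographic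
projection gives a continuous `g : ℂ → ℂ` with `g (i w) = -g w` on the unit circle, which is
mapped to the equator, where `φ` is multiplication by `i`. If `g` had no zero, it would have a
continuous logarithm `L` on the simply connected plane; then `L (i w) - L w - π i` takes values
in `2π i ℤ` on the connected circle, hence is a constant `2π i n`, and going once around the
circle in four quarter turns gives `0 = 4 (2n + 1) π i`.
-/

open Complex Set Metric Real

theorem Complex.exists_eq_zero_of_map_I_mul_eq_neg {g : ℂ → ℂ} (hg : Continuous g)
    (hodd : ∀ w, ‖w‖ = 1 → g (I * w) = -g w) : ∃ w, g w = 0 := by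
  by_contra! hne
  obtain ⟨L, ⟨-, hL⟩, -⟩ := isCoveringMapOn_exp.existsUnique_continuousMap_lifts
    ⟨g, hg⟩ (a₀ := 0) (exp_log (hne 0)) hne
  have hexpL (w : ℂ) : exp (L w) = g w := congrFun hL w
  set c : ℂ → ℂ := fun w ↦ L (I * w) - L w - π * I
  have hc_mem : MapsTo c (sphere 0 1) (AddSubgroup.zmultiples (2 * π * I)) := by
    intro w hw
    have : exp (c w) = 1 := by
      simp only [c, exp_sub, hexpL, exp_pi_mul_I, hodd w (by simpa using hw)]
      field_simp [hne w]
    obtain ⟨n, hn⟩ := exp_eq_one_iff.mp this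
    exact ⟨n, by simp [hn]⟩
  have hc_const (w : ℂ) (hw : ‖w‖ = 1) : c w = c 1 :=
    (isConnected_sphere (by simp [rank_real_complex]) (0 : ℂ) zero_le_one).isPreconnected
      |>.constant_of_mapsTo
        (isDiscrete_iff_discreteTopology.mpr (NormedSpace.discreteTopology_zmultiples _))
        (by fun_prop) hc_mem (by simpa using hw) (by simp)
  have hsum : c 1 + c I + c (-1) + c (-I) = -4 * π * I := by
    simp only [c, mul_one, I_mul_I, mul_neg, neg_neg]
    ring
  rw [hc_const I (by simp), hc_const (-1) (by simp), hc_const (-I) (by simp)] at hsum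
  obtain ⟨n, hn⟩ := hc_mem (by simp : (1 : ℂ) ∈ sphere 0 1)
  have hn' : c 1 = n * (2 * π * I) := by simpa using hn.symm
  have h2n1 : ((2 * n + 1 : ℤ) : ℂ) = 0 := by
    have hπI : (π : ℂ) * I ≠ 0 := by simp [pi_ne_zero]
    apply mul_left_cancel₀ hπI
    push_cast
    linear_combination (1 / 4 : ℂ) * hsum - hn'
  have : 2 * n + 1 = 0 := by exact_mod_cast h2n1
  omega

def twoSphere : Set (ℝ × ℝ × ℝ) := {p | p.1 ^ 2 + p.2.1 ^ 2 + p.2.2 ^ 2 = 1}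

def quarterTurn (p : ℝ × ℝ × ℝ) : ℝ × ℝ × ℝ := (-p.2.1, p.1, -p.2.2)

section QuarterTurnAltSum

variable {M : Type*} [AddCommGroup M]

def quarterTurnAltSum (f : ℝ × ℝ × ℝ → M) (p : ℝ × ℝ × ℝ) : M :=
  f (p.2.1, -p.1, -p.2.2) - f (-p.1, -p.2.1, p.2.2) + f (-p.2.1, p.1, -p.2.2)
    - f (p.1, p.2.1, p.2.2)

theorem quarterTurnAltSum_quarterTurn (f : ℝ × ℝ × ℝ → M) (p : ℝ × ℝ × ℝ) :
    quarterTurnAltSum f (quarterTurn p) = -quarterTurnAltSum f p := by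
  simp only [quarterTurnAltSum, quarterTurn, neg_neg]
  abel

theorem continuousOn_quarterTurnAltSum [TopologicalSpace M] [IsTopologicalAddGroup M]
    {f : ℝ × ℝ × ℝ → M} (hf : ContinuousOn f twoSphere) :
    ContinuousOn (quarterTurnAltSum f) twoSphere := by
  have hcomp (σ : ℝ × ℝ × ℝ → ℝ × ℝ × ℝ) (hσ : Continuous σ)
      (hmaps : MapsTo σ twoSphere twoSphere) : ContinuousOn (f ∘ σ) twoSphere :=
    hf.comp hσ.continuousOn hmaps
  refine (((hcomp _ ?_ ?_).sub (hcomp _ ?_ ?_)).add (hcomp _ ?_ ?_)).sub (hcomp _ ?_ ?_)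
  all_goals first
    | fun_prop
    | intro p (hp : _ = 1); simp only [twoSphere, mem_ofPred_eq, neg_sq]; linarith

end QuarterTurnAltSum

noncomputable def invStereographic (w : ℂ) : ℝ × ℝ × ℝ :=
  (2 * w.re / (1 + normSq w), 2 * w.im / (1 + normSq w), (1 - normSq w) / (1 + normSq w))

theorem continuous_invStereographic : Continuous invStereographic := by
  have hpos (w : ℂ) : 1 + normSq w ≠ 0 := by linarith [normSq_nonneg w]
  unfold invStereographic
  fun_prop (disch := exact hpos _)

theorem invStereographic_mem_twoSphere (w : ℂ) : invStereographic w ∈ twoSphere := by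
  have hpos : 1 + normSq w ≠ 0 := by linarith [normSq_nonneg w]
  simp only [twoSphere, invStereographic, mem_ofPred_eq, div_pow]
  field_simp
  rw [normSq_apply]
  ring

theorem invStereographic_I_mul {w : ℂ} (hw : ‖w‖ = 1) :
    invStereographic (I * w) = quarterTurn (invStereographic w) := by
  have hw' : normSq w = 1 := by rw [normSq_eq_norm_sq, hw, one_pow]
  simp [invStereographic, quarterTurn, hw', neg_div]

theorem stmt_4 (f : ℝ × ℝ × ℝ → ℝ × ℝ)
    (hf : ContinuousOn f {p : ℝ × ℝ × ℝ | p.1 ^ 2 + p.2.1 ^ 2 + p.2.2 ^ 2 = 1}) :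
    ∃ p : ℝ × ℝ × ℝ, p.1 ^ 2 + p.2.1 ^ 2 + p.2.2 ^ 2 = 1 ∧
      f (p.2.1, -p.1, -p.2.2) - f (-p.1, -p.2.1, p.2.2)
        + f (-p.2.1, p.1, -p.2.2) - f (p.1, p.2.1, p.2.2) = 0 := by
  let g : ℂ → ℂ := fun w ↦ equivRealProdCLM.symm (quarterTurnAltSum f (invStereographic w))
  have hg : Continuous g := equivRealProdCLM.symm.continuous.comp <|
    (continuousOn_quarterTurnAltSum hf).comp_continuous continuous_invStereographic
      invStereographic_mem_twoSphere
  have hodd (w : ℂ) (hw : ‖w‖ = 1) : g (I * w) = -g w := by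
    simp only [g, invStereographic_I_mul hw, quarterTurnAltSum_quarterTurn, map_neg]
  obtain ⟨w, hw⟩ := exists_eq_zero_of_map_I_mul_eq_neg hg hodd
  exact ⟨invStereographic w, invStereographic_mem_twoSphere w,
    (map_eq_zero_iff _ equivRealProdCLM.symm.injective).mp hw⟩
end
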